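/- Under the consensus protocol x[k+1] = (I - εL)x[k], where L is the Laplacian of a connected undirected graph and 0 < ε < 1/d_max (d_max the maximum degree), the disagreement function z_k = x[k]ᵀ L_c x[k], with L_c the Laplacian of the complete graph on n vertices, is nonincreasing in k: z_{k+1} ≤ z_k for all k. -/

import Mathlib

/-!
Write the disagreement as `xᵀ L_c x = n ‖x‖² - (∑ᵢ xᵢ)²`. The consensus step preserves `∑ᵢ xᵢ`
since `1ᵀ L = 0`, so it suffices that it does not increase `‖x‖²`. Now
`‖x - ε L x‖² = ‖x‖² - 2ε xᵀLx + ε² ‖Lx‖²`, and Cauchy–Schwarz on each row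
`(Lx)ᵢ = ∑_{j ~ i} (xᵢ - xⱼ)` gives `‖Lx‖² ≤ 2 d_max xᵀLx`; hence the change is at most
`-2ε (1 - ε d_max) xᵀLx ≤ 0`.
-/

open Matrix Finset

theorem Fintype.sum_sum_sub_sq {ι R : Type*} [Fintype ι] [CommRing R] (x : ι → R) :
    ∑ i, ∑ j, (x i - x j) ^ 2 = 2 * (Fintype.card ι * ∑ i, x i ^ 2 - (∑ i, x i) ^ 2) := by
  simp only [sub_sq, sum_add_distrib, sum_sub_distrib, ← mul_sum, ← sum_mul, sum_const, card_univ,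
    nsmul_eq_mul]
  ring

namespace SimpleGraph

variable {V : Type*} [Fintype V] [DecidableEq V] (G : SimpleGraph V) [DecidableRel G.Adj]

theorem sum_lapMatrix_mulVec {R : Type*} [CommRing R] (x : V → R) :
    ∑ i, (G.lapMatrix R *ᵥ x) i = 0 := by
  rw [← one_dotProduct, dotProduct_mulVec, ← mulVec_transpose, (G.isSymm_lapMatrix R).eq]
  exact (congrArg (· ⬝ᵥ x) (G.lapMatrix_mulVec_const_eq_zero)).trans (zero_dotProduct x)

theorem dotProduct_lapMatrix_mulVec (x : V → ℝ) :
    x ⬝ᵥ (G.lapMatrix ℝ *ᵥ x) = (∑ i, ∑ j ∈ G.neighborFinset i, (x i - x j) ^ 2) / 2 := by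
  simp_rw [← toLinearMap₂'_apply', lapMatrix_toLinearMap₂', neighborFinset_eq_filter, sum_filter]

theorem lapMatrix_mulVec_apply_eq_sum_neighborFinset (x : V → ℝ) (i : V) :
    (G.lapMatrix ℝ *ᵥ x) i = ∑ j ∈ G.neighborFinset i, (x i - x j) := by
  rw [lapMatrix_mulVec_apply, sum_sub_distrib, sum_const, card_neighborFinset_eq_degree,
    nsmul_eq_mul]

theorem lapMatrix_mulVec_dotProduct_self_le {d : ℕ} (hd : ∀ i, G.degree i ≤ d) (x : V → ℝ) :
    (G.lapMatrix ℝ *ᵥ x) ⬝ᵥ (G.lapMatrix ℝ *ᵥ x) ≤ 2 * d * (x ⬝ᵥ (G.lapMatrix ℝ *ᵥ x)) := by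
  have hrow (i : V) : (G.lapMatrix ℝ *ᵥ x) i ^ 2 ≤ d * ∑ j ∈ G.neighborFinset i, (x i - x j) ^ 2 :=
    calc (G.lapMatrix ℝ *ᵥ x) i ^ 2
        ≤ #(G.neighborFinset i) * ∑ j ∈ G.neighborFinset i, (x i - x j) ^ 2 := by
          rw [lapMatrix_mulVec_apply_eq_sum_neighborFinset]
          exact sq_sum_le_card_mul_sum_sq
      _ ≤ d * ∑ j ∈ G.neighborFinset i, (x i - x j) ^ 2 := by
          rw [card_neighborFinset_eq_degree]
          gcongr
          exact hd i
  calc (G.lapMatrix ℝ *ᵥ x) ⬝ᵥ (G.lapMatrix ℝ *ᵥ x)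
      = ∑ i, (G.lapMatrix ℝ *ᵥ x) i ^ 2 := by simp only [dotProduct, sq]
    _ ≤ ∑ i, d * ∑ j ∈ G.neighborFinset i, (x i - x j) ^ 2 := sum_le_sum fun i _ ↦ hrow i
    _ = 2 * d * (x ⬝ᵥ (G.lapMatrix ℝ *ᵥ x)) := by
      rw [dotProduct_lapMatrix_mulVec, ← mul_sum]
      ring

theorem dotProduct_self_sub_smul_lapMatrix_mulVec_le {d : ℕ} (hd : ∀ i, G.degree i ≤ d)
    {ε : ℝ} (hε : 0 ≤ ε) (hεd : ε * d ≤ 1) (x : V → ℝ) :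
    (x - ε • G.lapMatrix ℝ *ᵥ x) ⬝ᵥ (x - ε • G.lapMatrix ℝ *ᵥ x) ≤ x ⬝ᵥ x := by
  set y := G.lapMatrix ℝ *ᵥ x
  have hq : 0 ≤ x ⬝ᵥ y := by
    simpa using (G.posSemidef_lapMatrix ℝ).dotProduct_mulVec_nonneg x
  have hyy := G.lapMatrix_mulVec_dotProduct_self_le hd x
  have hexpand : (x - ε • y) ⬝ᵥ (x - ε • y) = x ⬝ᵥ x - 2 * ε * (x ⬝ᵥ y) + ε ^ 2 * (y ⬝ᵥ y) := by
    simp only [sub_dotProduct, dotProduct_sub, smul_dotProduct, dotProduct_smul, smul_eq_mul,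
      dotProduct_comm y x]
    ring
  rw [hexpand]
  nlinarith [mul_le_mul_of_nonneg_left hyy (sq_nonneg ε), mul_nonneg hε hq]

theorem dotProduct_top_lapMatrix_mulVec (x : V → ℝ) :
    x ⬝ᵥ ((⊤ : SimpleGraph V).lapMatrix ℝ *ᵥ x) = Fintype.card V * (x ⬝ᵥ x) - (∑ i, x i) ^ 2 := by
  have hdiag (i j : V) :
      (if (⊤ : SimpleGraph V).Adj i j then (x i - x j) ^ 2 else 0) = (x i - x j) ^ 2 := by
    by_cases h : i = j <;> simp [h]
  rw [← toLinearMap₂'_apply', lapMatrix_toLinearMap₂']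
  simp_rw [hdiag, Fintype.sum_sum_sub_sq, dotProduct, ← sq]
  ring

end SimpleGraph

theorem consensus_disagreement_nonincreasing_general
    (n : ℕ) (G : SimpleGraph (Fin n)) [DecidableRel G.Adj]
    (ε : ℝ) (hε0 : 0 < ε)
    (hε1 : ε < 1 / ((Finset.univ.sup fun v => G.degree v : ℕ) : ℝ))
    (x : ℕ → Fin n → ℝ)
    (hdyn : ∀ k, x (k + 1) =
      ((1 : Matrix (Fin n) (Fin n) ℝ) - ε • G.lapMatrix ℝ) *ᵥ x k) :
    ∀ k, x (k + 1) ⬝ᵥ ((⊤ : SimpleGraph (Fin n)).lapMatrix ℝ *ᵥ x (k + 1))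
        ≤ x k ⬝ᵥ ((⊤ : SimpleGraph (Fin n)).lapMatrix ℝ *ᵥ x k) := by
  intro k
  set d := Finset.univ.sup fun v => G.degree v
  have hd (i : Fin n) : G.degree i ≤ d := le_sup (f := fun v => G.degree v) (mem_univ i)
  have hεd : ε * d ≤ 1 := by
    rcases Nat.eq_zero_or_pos d with hd0 | hd0
    · simp [hd0]
    · exact ((lt_div_iff₀ (by exact_mod_cast hd0)).1 hε1).le
  have hstep : x (k + 1) = x k - ε • G.lapMatrix ℝ *ᵥ x k := by
    rw [hdyn k, sub_mulVec, one_mulVec, smul_mulVec]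
  have hmean : ∑ i, x (k + 1) i = ∑ i, x k i := by
    simp [hstep, sum_sub_distrib, ← mul_sum, G.sum_lapMatrix_mulVec]
  rw [SimpleGraph.dotProduct_top_lapMatrix_mulVec, SimpleGraph.dotProduct_top_lapMatrix_mulVec,
    hmean, hstep]
  gcongr
  exact G.dotProduct_self_sub_smul_lapMatrix_mulVec_le hd hε0.le hεd (x k)

/-- Under the consensus protocol `x[k+1] = (I - εL)x[k]` on a connected graph
with `0 < ε < 1/d_max`, the disagreement `z k = x[k]ᵀ L_c x[k]` (with `L_c` the
Laplacian of the complete graph) is nonincreasing. -/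
theorem consensus_disagreement_nonincreasing
    (n : ℕ) (G : SimpleGraph (Fin n)) [DecidableRel G.Adj]
    (hconn : G.Connected)
    (ε : ℝ) (hε0 : 0 < ε)
    (hε1 : ε < 1 / ((Finset.univ.sup fun v => G.degree v : ℕ) : ℝ))
    (x : ℕ → Fin n → ℝ)
    (hdyn : ∀ k, x (k + 1) =
      ((1 : Matrix (Fin n) (Fin n) ℝ) - ε • G.lapMatrix ℝ) *ᵥ x k) :
    ∀ k, x (k + 1) ⬝ᵥ ((⊤ : SimpleGraph (Fin n)).lapMatrix ℝ *ᵥ x (k + 1))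
        ≤ x k ⬝ᵥ ((⊤ : SimpleGraph (Fin n)).lapMatrix ℝ *ᵥ x k) :=
  consensus_disagreement_nonincreasing_general n G ε hε0 hε1 x hdyn
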